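/- arXiv:0902.3445 — 2 statements merged into one kernel-verified Lean document; each statement's English description precedes it below -/
import Mathlib

section
/- Let Z : B(H) → B(H) be defined by Z(X) = Σ_{j=1}^d A_j* X A_j where Σ_j A_j* A_j = 1, and suppose the vector state of a unit vector Ω ∈ H is Z-invariant: ⟨Ω, Z(X) Ω⟩ = ⟨Ω, X Ω⟩ for all X. Let p be the orthogonal projection onto ℂΩ. Then the sequence (Zⁿ(p))_{n≥0} is monotonically increasing in the Loewner order and bounded above by 1; in particular p ≤ Z(p). -/
/-!
`Z` is a monotone unital map on `B(H)`, so it preserves `0 ≤ p ≤ 1` and the iterates `Zⁿ(p)`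
increase as soon as `p ≤ Z(p)`. For that, invariance of the state gives `p Z(p) p = p`; since
`1 - Z(p) ≥ 0`, compressing it to zero by `p` forces `Z(p) p = p`, i.e. `Z(p)` commutes with `p`
and `Z(p) - p = (1 - p) Z(p) (1 - p) ≥ 0`.
-/

open InnerProductSpace

section CStarAlgebra

lemma mul_eq_zero_of_nonneg_of_star_mul_mul_eq_zero {A : Type*} [NonUnitalCStarAlgebra A]
    [PartialOrder A] [StarOrderedRing A] {a b : A} (ha : 0 ≤ a) (h : star b * a * b = 0) :
    a * b = 0 := by
  have hsqrt : CFC.sqrt a * b = 0 := by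
    have := CFC.norm_star_mul_mul_self_of_nonneg b ha
    rwa [h, norm_zero, eq_comm, sq_eq_zero_iff, norm_eq_zero] at this
  rw [← CFC.sqrt_mul_sqrt_self a, mul_assoc, hsqrt, mul_zero]

variable {A : Type*} [CStarAlgebra A] [PartialOrder A] [StarOrderedRing A]

lemma IsStarProjection.le_of_mul_mul_eq_self {a e : A} (he : IsStarProjection e)
    (ha₀ : 0 ≤ a) (ha₁ : a ≤ 1) (h : e * a * e = e) : e ≤ a := by
  have hae : a * e = e := by
    have : (1 - a) * e = 0 := by
      refine mul_eq_zero_of_nonneg_of_star_mul_mul_eq_zero (sub_nonneg.2 ha₁) ?_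
      rw [he.isSelfAdjoint.star_eq, mul_sub, sub_mul, mul_one, h, he.isIdempotentElem.eq,
        sub_self]
    rwa [sub_mul, one_mul, sub_eq_zero, eq_comm] at this
  have hea : e * a = e := by
    simpa [(IsSelfAdjoint.of_nonneg ha₀).star_eq, he.isSelfAdjoint.star_eq] using congr(star $hae)
  have hcompl : star (1 - e) * a * (1 - e) = a - e := by
    rw [he.one_sub.isSelfAdjoint.star_eq]
    simp only [sub_mul, mul_sub, one_mul, mul_one, hae, hea, he.isIdempotentElem.eq]
    abel
  exact sub_nonneg.1 (hcompl ▸ star_left_conjugate_nonneg ha₀ (1 - e))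

end CStarAlgebra

lemma monotone_sum_star_mul_mul {R ι : Type*} [Ring R] [PartialOrder R] [StarRing R]
    [StarOrderedRing R] [Fintype ι] (a : ι → R) :
    Monotone fun x => ∑ j, star (a j) * x * a j :=
  fun _ _ hxy => Finset.sum_le_sum fun j _ => star_left_conjugate_le_conjugate hxy (a j)

lemma InnerProductSpace.rankOne_mul_mul_rankOne {𝕜 E : Type*} [RCLike 𝕜]
    [NormedAddCommGroup E] [InnerProductSpace 𝕜 E] (x y z w : E) (X : E →L[𝕜] E) :
    rankOne 𝕜 x y * X * rankOne 𝕜 z w = inner 𝕜 y (X z) • rankOne 𝕜 x w := by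
  rw [mul_assoc, ContinuousLinearMap.mul_def, ContinuousLinearMap.mul_def,
    comp_rankOne, rankOne_comp_rankOne]

/-- If `Z(X) = Σ_j A_j* X A_j` is unital and the vector state of the unit vector `Ω` is
`Z`-invariant, then with `p` the rank-one projection onto `ℂΩ` the sequence `Zⁿ(p)` is
increasing in the Loewner order and bounded above by `1`; in particular `p ≤ Z(p)`
(the case `n = 0`). -/
theorem iterates_of_projection_monotone {H : Type*}
    [NormedAddCommGroup H] [InnerProductSpace ℂ H] [CompleteSpace H]
    (d : ℕ) (A : Fin d → H →L[ℂ] H)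
    (Z : (H →L[ℂ] H) → (H →L[ℂ] H))
    (hZ : ∀ X, Z X = ∑ j, ContinuousLinearMap.adjoint (A j) ∘L X ∘L A j)
    (hunital : ∑ j, ContinuousLinearMap.adjoint (A j) ∘L A j = 1)
    (Ω : H) (hΩ : ‖Ω‖ = 1)
    (hinv : ∀ X : H →L[ℂ] H, @inner ℂ _ _ Ω (Z X Ω) = @inner ℂ _ _ Ω (X Ω))
    (p : H →L[ℂ] H) (hp : ∀ ξ : H, p ξ = (@inner ℂ _ _ Ω ξ) • Ω) :
    ∀ n : ℕ, (Z^[n + 1] p - Z^[n] p).IsPositive ∧ (1 - Z^[n] p).IsPositive := by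
  have hmono : Monotone Z := funext hZ ▸ monotone_sum_star_mul_mul A
  have hZ0 : Z 0 = 0 := by simp [hZ]
  have hZ1 : Z 1 = 1 := by simpa [hZ, ContinuousLinearMap.one_def] using hunital
  obtain rfl : p = rankOne ℂ Ω Ω := ContinuousLinearMap.ext hp
  have hproj : IsStarProjection (rankOne ℂ Ω Ω) := isStarProjection_rankOne_self hΩ
  have hcompress : rankOne ℂ Ω Ω * Z (rankOne ℂ Ω Ω) * rankOne ℂ Ω Ω = rankOne ℂ Ω Ω := by
    rw [rankOne_mul_mul_rankOne, hinv, rankOne_apply, inner_smul_right, inner_self_eq_one_of_norm_eq_one hΩ, mul_one,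
      one_smul]
  have hbase : rankOne ℂ Ω Ω ≤ Z (rankOne ℂ Ω Ω) :=
    hproj.le_of_mul_mul_eq_self (hZ0 ▸ hmono hproj.nonneg) (hZ1 ▸ hmono hproj.le_one) hcompress
  intro n
  simp only [← ContinuousLinearMap.nonneg_iff_isPositive, sub_nonneg]
  exact ⟨hmono.monotone_iterate_of_le_map hbase n.le_succ,
    (hmono.iterate n hproj.le_one).trans_eq (Function.iterate_fixed hZ1 n)⟩
end

section
/- Let H be a finite-dimensional Hilbert space and A_1,...,A_d ∈ B(H) with Σ_j A_j* A_j = 1 (so Z(X) = Σ_j A_j* X A_j is unital completely positive). Suppose Ω ∈ H is a unit vector with A_j Ω = ω_j Ω for scalars ω_j, and let A_j^o be the compression of A_j to H^o = (ℂΩ)^⊥. Then Z is ergodic (its fixed point space is ℂ·1) if and only if the tuple (A_1^o, ..., A_d^o) is stable, i.e., lim_{n→∞} Σ_{|α|=n} ‖A^o_α ξ‖² = 0 for every ξ ∈ H^o, where for a word α = α_n...α_1 over {1,...,d}, A^o_α = A^o_{α_n} ⋯ A^o_{α_1}. -/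
/-!
Let `P` be the orthogonal projection onto `H^o` and `Z(X) = Σ_j A_j* X A_j`. Since `ℂΩ` is
invariant under every `A_j`, compression commutes with words: `A^o_α P = P A_α`. Hence
`Σ_{|α|=n} ‖A^o_α P x‖² = ⟪x, Zⁿ(P) x⟫`, and these sums decrease in `n` because the compressed
tuple is a row contraction.

If `Z` is ergodic, take a limit point `X` of the bounded sequence `Zⁿ(P)`. Both `X` and `Z(X)`
have the limit of the decreasing sums as quadratic form, so `Z(X) = X` by polarization; thus
`X = c • 1`, and `⟪Ω, X Ω⟫ = 0` forces `c = 0`, i.e. the sums tend to `0`.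

Conversely, if `Z(X) = X` then `Y = X - ⟪Ω, X Ω⟫ • 1` is a fixed point with `⟪Ω, Y Ω⟫ = 0`, so
`⟪x, Y y⟫ = Σ_{|α|=n} ⟪A_α x, Y A_α y⟫` and every term involves `P A_α x` or `P A_α y`.
Cauchy–Schwarz bounds the sum by the stable quantities, which tend to `0`; hence `Y = 0`.
-/

open ContinuousLinearMap Filter Topology
open scoped InnerProductSpace

section Words

variable {M ι : Type*} [Monoid M]

def wordProd {n : ℕ} (A : ι → M) (α : Fin n → ι) : M :=
  (List.ofFn fun i => A (α i)).prod

@[simp] lemma wordProd_zero (A : ι → M) (α : Fin 0 → ι) : wordProd A α = 1 := by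
  simp [wordProd]

@[simp] lemma wordProd_cons {n : ℕ} (A : ι → M) (j : ι) (β : Fin n → ι) :
    wordProd A (Fin.cons j β : Fin (n + 1) → ι) = A j * wordProd A β := by
  simp [wordProd, List.ofFn_succ]

lemma Fintype.sum_pi_fin_succ {G : Type*} [AddCommMonoid G] [Fintype ι] {n : ℕ}
    (f : (Fin (n + 1) → ι) → G) :
    ∑ α, f α = ∑ j, ∑ β : Fin n → ι, f (Fin.cons j β) := by
  rw [← Fintype.sum_prod_type']
  exact (Fintype.sum_equiv (Fin.consEquiv fun _ => ι) _ _ fun _ => rfl).symm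

end Words

section WordNormSq

variable {𝕜 F ι : Type*} [NormedField 𝕜] [SeminormedAddCommGroup F] [NormedSpace 𝕜 F]
  [Fintype ι] (B : ι → F →L[𝕜] F)

def wordNormSq (n : ℕ) (ξ : F) : ℝ :=
  ∑ α : Fin n → ι, ‖wordProd B α ξ‖ ^ 2

@[simp] lemma wordNormSq_zero_right (n : ℕ) : wordNormSq B n 0 = 0 := by
  simp [wordNormSq]

lemma wordNormSq_succ (n : ℕ) (ξ : F) :
    wordNormSq B (n + 1) ξ = ∑ β : Fin n → ι, ∑ j, ‖B j (wordProd B β ξ)‖ ^ 2 := by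
  rw [wordNormSq, Fintype.sum_pi_fin_succ, Finset.sum_comm]
  simp

lemma wordNormSq_eq_norm_sq (hB : ∀ ξ, ∑ j, ‖B j ξ‖ ^ 2 = ‖ξ‖ ^ 2) (n : ℕ) (ξ : F) :
    wordNormSq B n ξ = ‖ξ‖ ^ 2 := by
  induction n with
  | zero => simp [wordNormSq]
  | succ n ih => rw [wordNormSq_succ, ← ih, wordNormSq]; simp only [hB]

lemma wordNormSq_succ_le (hB : ∀ ξ, ∑ j, ‖B j ξ‖ ^ 2 ≤ ‖ξ‖ ^ 2) (n : ℕ) (ξ : F) :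
    wordNormSq B (n + 1) ξ ≤ wordNormSq B n ξ := by
  rw [wordNormSq_succ]
  exact Finset.sum_le_sum fun β _ => hB _

lemma tendsto_wordNormSq_iInf (hB : ∀ ξ, ∑ j, ‖B j ξ‖ ^ 2 ≤ ‖ξ‖ ^ 2) (ξ : F) :
    Tendsto (wordNormSq B · ξ) atTop (𝓝 (⨅ n, wordNormSq B n ξ)) :=
  tendsto_atTop_ciInf (antitone_nat_of_succ_le fun n => wordNormSq_succ_le B hB n ξ)
    ⟨0, Set.forall_mem_range.mpr fun _ => Finset.sum_nonneg fun _ _ => sq_nonneg _⟩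

end WordNormSq

section Compression

variable {𝕜 E ι : Type*} [RCLike 𝕜] [NormedAddCommGroup E] [InnerProductSpace 𝕜 E]
  {K : Submodule 𝕜 E} [K.HasOrthogonalProjection]

lemma compression_apply_orthogonalProjectionOnto {T : E →L[𝕜] E} {S : Kᗮ →L[𝕜] Kᗮ}
    (hT : ∀ v ∈ K, T v ∈ K) (hS : ∀ ξ : Kᗮ, S ξ = Kᗮ.orthogonalProjectionOnto (T ξ)) (x : E) :
    S (Kᗮ.orthogonalProjectionOnto x) = Kᗮ.orthogonalProjectionOnto (T x) := by
  conv_rhs => rw [← K.starProjection_add_starProjection_orthogonal x]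
  rw [hS, map_add, map_add, Submodule.orthogonalProjectionOnto_orthogonal_apply_eq_zero
    (hT _ (K.starProjection_apply_mem x)), zero_add, Submodule.starProjection_apply]

variable {A : ι → E →L[𝕜] E} {B : ι → Kᗮ →L[𝕜] Kᗮ}

lemma wordProd_compression_apply (hA : ∀ j, ∀ v ∈ K, A j v ∈ K)
    (hB : ∀ j (ξ : Kᗮ), B j ξ = Kᗮ.orthogonalProjectionOnto (A j ξ)) {n : ℕ} (α : Fin n → ι)
    (x : E) :
    wordProd B α (Kᗮ.orthogonalProjectionOnto x) =
      Kᗮ.orthogonalProjectionOnto (wordProd A α x) := by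
  induction n with
  | zero => simp
  | succ n ih =>
    rw [← Fin.cons_self_tail α, wordProd_cons, wordProd_cons, mul_apply_eq_comp,
      mul_apply_eq_comp, ih,
      compression_apply_orthogonalProjectionOnto (hA _) (hB _)]

lemma wordNormSq_compression [Fintype ι] (hA : ∀ j, ∀ v ∈ K, A j v ∈ K)
    (hB : ∀ j (ξ : Kᗮ), B j ξ = Kᗮ.orthogonalProjectionOnto (A j ξ)) (n : ℕ) (x : E) :
    wordNormSq B n (Kᗮ.orthogonalProjectionOnto x) =
      ∑ α : Fin n → ι, ‖Kᗮ.orthogonalProjectionOnto (wordProd A α x)‖ ^ 2 := by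
  simp only [wordNormSq, wordProd_compression_apply hA hB]

lemma norm_inner_le_of_inner_eq_zero_on {Y : E →L[𝕜] E} (hY : ∀ u ∈ K, ∀ v ∈ K, ⟪u, Y v⟫_𝕜 = 0)
    (v w : E) :
    ‖⟪v, Y w⟫_𝕜‖ ≤ ‖Y‖ * (‖Kᗮ.orthogonalProjectionOnto v‖ * ‖w‖ +
      ‖v‖ * ‖Kᗮ.orthogonalProjectionOnto w‖) := by
  have hv := eq_sub_of_add_eq (K.starProjection_add_starProjection_orthogonal v)
  have hw := eq_sub_of_add_eq (K.starProjection_add_starProjection_orthogonal w)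
  have hKK := hY _ (K.starProjection_apply_mem v) _ (K.starProjection_apply_mem w)
  have hsplit : ⟪v, Y w⟫_𝕜 =
      ⟪Kᗮ.starProjection v, Y w⟫_𝕜 + ⟪K.starProjection v, Y (Kᗮ.starProjection w)⟫_𝕜 := by
    rw [hv, hw, map_sub, inner_sub_left, inner_sub_right, inner_sub_right] at hKK
    rw [hv, inner_sub_left]
    linear_combination hKK
  rw [hsplit]
  calc _ ≤ ‖Kᗮ.starProjection v‖ * (‖Y‖ * ‖w‖) +
        ‖K.starProjection v‖ * (‖Y‖ * ‖Kᗮ.starProjection w‖) := by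
        refine (norm_add_le _ _).trans (add_le_add ?_ ?_) <;>
          exact (norm_inner_le_norm _ _).trans (by gcongr; exact Y.le_opNorm _)
    _ ≤ ‖Kᗮ.starProjection v‖ * (‖Y‖ * ‖w‖) + ‖v‖ * (‖Y‖ * ‖Kᗮ.starProjection w‖) := by
        gcongr; exact K.norm_starProjection_apply_le v
    _ = _ := by simp only [Submodule.starProjection_apply, Submodule.coe_norm]; ring

end Compression

section KrausMap

variable {𝕜 E ι : Type*} [RCLike 𝕜] [NormedAddCommGroup E] [InnerProductSpace 𝕜 E]
  [CompleteSpace E] [Fintype ι] {A : ι → E →L[𝕜] E}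

lemma sum_norm_apply_sq_eq_of_sum_adjoint_comp_self_eq_one
    (hunit : ∑ j, adjoint (A j) ∘L A j = 1) (x : E) : ∑ j, ‖A j x‖ ^ 2 = ‖x‖ ^ 2 := by
  have h := congrArg (fun T : E →L[𝕜] E => RCLike.re ⟪x, T x⟫_𝕜) hunit
  simp only [sum_apply, inner_sum, map_sum, comp_apply, adjoint_inner_right, one_def, id_apply] at h
  simpa only [inner_self_eq_norm_sq] using h

variable (A) in
noncomputable def krausMap : (E →L[𝕜] E) →L[𝕜] E →L[𝕜] E :=
  ∑ j, (compL 𝕜 E E E (adjoint (A j))).comp ((compL 𝕜 E E E).flip (A j))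

lemma krausMap_apply (X : E →L[𝕜] E) : krausMap A X = ∑ j, adjoint (A j) ∘L X ∘L A j := by
  simp only [krausMap, sum_apply, comp_apply, flip_apply, compL_apply]

lemma krausMap_one (hunit : ∑ j, adjoint (A j) ∘L A j = 1) : krausMap A 1 = 1 := by
  simpa only [krausMap_apply, one_def, id_comp] using hunit

lemma inner_krausMap_iterate_apply (n : ℕ) (X : E →L[𝕜] E) (x y : E) :
    ⟪x, (krausMap A)^[n] X y⟫_𝕜 = ∑ α : Fin n → ι, ⟪wordProd A α x, X (wordProd A α y)⟫_𝕜 := by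
  induction n generalizing X with
  | zero => simp
  | succ n ih =>
    rw [Function.iterate_succ_apply, ih, Fintype.sum_pi_fin_succ, Finset.sum_comm]
    simp [krausMap_apply, sum_apply, inner_sum, adjoint_inner_right, mul_apply_eq_comp]

lemma norm_krausMap_iterate_apply_le (hunit : ∑ j, adjoint (A j) ∘L A j = 1) (n : ℕ)
    (X : E →L[𝕜] E) : ‖(krausMap A)^[n] X‖ ≤ ‖X‖ := by
  have hnorm := wordNormSq_eq_norm_sq A (sum_norm_apply_sq_eq_of_sum_adjoint_comp_self_eq_one hunit) n
  refine opNorm_le_of_re_inner_le (norm_nonneg X) fun x y hx hy => ?_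
  calc RCLike.re ⟪(krausMap A)^[n] X x, y⟫_𝕜 ≤ ‖⟪y, (krausMap A)^[n] X x⟫_𝕜‖ :=
        (RCLike.re_le_norm _).trans (norm_inner_symm _ _).le
    _ ≤ ∑ α : Fin n → ι, ‖X‖ * (‖wordProd A α y‖ * ‖wordProd A α x‖) := by
        rw [inner_krausMap_iterate_apply]
        refine (norm_sum_le _ _).trans (Finset.sum_le_sum fun α _ => ?_)
        calc _ ≤ ‖wordProd A α y‖ * ‖X (wordProd A α x)‖ := norm_inner_le_norm _ _
          _ ≤ ‖wordProd A α y‖ * (‖X‖ * ‖wordProd A α x‖) := by gcongr; exact X.le_opNorm _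
          _ = _ := by ring
    _ ≤ ‖X‖ * (√(wordNormSq A n y) * √(wordNormSq A n x)) := by
        rw [← Finset.mul_sum]
        gcongr
        exact Real.sum_mul_le_sqrt_mul_sqrt _ _ _
    _ = ‖X‖ := by simp [hnorm, hx, hy]

end KrausMap

section KrausMapCompression

variable {𝕜 E ι : Type*} [RCLike 𝕜] [NormedAddCommGroup E] [InnerProductSpace 𝕜 E]
  [CompleteSpace E] [Fintype ι] {K : Submodule 𝕜 E} [K.HasOrthogonalProjection]
  {A : ι → E →L[𝕜] E} {B : ι → Kᗮ →L[𝕜] Kᗮ}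

lemma inner_krausMap_iterate_starProjection (hA : ∀ j, ∀ v ∈ K, A j v ∈ K)
    (hB : ∀ j (ξ : Kᗮ), B j ξ = Kᗮ.orthogonalProjectionOnto (A j ξ)) (n : ℕ) (x : E) :
    ⟪x, (krausMap A)^[n] Kᗮ.starProjection x⟫_𝕜 =
      wordNormSq B n (Kᗮ.orthogonalProjectionOnto x) := by
  rw [inner_krausMap_iterate_apply, wordNormSq_compression hA hB]
  push_cast
  refine Finset.sum_congr rfl fun α _ => ?_
  rw [Submodule.starProjection_apply, ← inner_conj_symm,
    ← Submodule.inner_orthogonalProjectionOnto_eq_of_mem_left, inner_self_conj,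
    inner_self_eq_norm_sq_to_K]

lemma sum_norm_compression_apply_sq_le
    (hB : ∀ j (ξ : Kᗮ), B j ξ = Kᗮ.orthogonalProjectionOnto (A j ξ))
    (hunit : ∑ j, adjoint (A j) ∘L A j = 1) (ξ : Kᗮ) : ∑ j, ‖B j ξ‖ ^ 2 ≤ ‖ξ‖ ^ 2 := by
  rw [Submodule.coe_norm, ← sum_norm_apply_sq_eq_of_sum_adjoint_comp_self_eq_one hunit]
  gcongr with j
  rw [hB]
  exact Kᗮ.norm_orthogonalProjectionOnto_apply_le _

lemma norm_inner_le_of_krausMap_eq_self (hA : ∀ j, ∀ v ∈ K, A j v ∈ K)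
    (hB : ∀ j (ξ : Kᗮ), B j ξ = Kᗮ.orthogonalProjectionOnto (A j ξ))
    (hunit : ∑ j, adjoint (A j) ∘L A j = 1) {Y : E →L[𝕜] E} (hY : krausMap A Y = Y)
    (hYK : ∀ u ∈ K, ∀ v ∈ K, ⟪u, Y v⟫_𝕜 = 0) (n : ℕ) (x y : E) :
    ‖⟪x, Y y⟫_𝕜‖ ≤ ‖Y‖ * (√(wordNormSq B n (Kᗮ.orthogonalProjectionOnto x)) * ‖y‖ +
      ‖x‖ * √(wordNormSq B n (Kᗮ.orthogonalProjectionOnto y))) := by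
  have hnorm :=
    wordNormSq_eq_norm_sq A (sum_norm_apply_sq_eq_of_sum_adjoint_comp_self_eq_one hunit) n
  rw [wordNormSq_compression hA hB, wordNormSq_compression hA hB, ← Real.sqrt_sq (norm_nonneg x),
    ← Real.sqrt_sq (norm_nonneg y), ← hnorm, ← hnorm]
  conv_lhs => rw [← Function.iterate_fixed hY n, inner_krausMap_iterate_apply]
  calc _ ≤ ∑ α : Fin n → ι,
        ‖Y‖ * (‖Kᗮ.orthogonalProjectionOnto (wordProd A α x)‖ * ‖wordProd A α y‖ +
        ‖wordProd A α x‖ * ‖Kᗮ.orthogonalProjectionOnto (wordProd A α y)‖) :=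
        (norm_sum_le _ _).trans
          (Finset.sum_le_sum fun α _ => norm_inner_le_of_inner_eq_zero_on hYK _ _)
    _ ≤ _ := by
        rw [← Finset.mul_sum, Finset.sum_add_distrib]
        gcongr <;> exact Real.sum_mul_le_sqrt_mul_sqrt _ _ _

lemma eq_zero_of_krausMap_eq_self (hA : ∀ j, ∀ v ∈ K, A j v ∈ K)
    (hB : ∀ j (ξ : Kᗮ), B j ξ = Kᗮ.orthogonalProjectionOnto (A j ξ))
    (hunit : ∑ j, adjoint (A j) ∘L A j = 1)
    (hstab : ∀ ξ : Kᗮ, Tendsto (wordNormSq B · ξ) atTop (𝓝 0)) {Y : E →L[𝕜] E}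
    (hY : krausMap A Y = Y) (hYK : ∀ u ∈ K, ∀ v ∈ K, ⟪u, Y v⟫_𝕜 = 0) : Y = 0 := by
  have hinner (x y : E) : ⟪x, Y y⟫_𝕜 = 0 := by
    have hlim : Tendsto (fun n => ‖Y‖ * (√(wordNormSq B n (Kᗮ.orthogonalProjectionOnto x)) * ‖y‖ +
        ‖x‖ * √(wordNormSq B n (Kᗮ.orthogonalProjectionOnto y)))) atTop (𝓝 0) := by
      simpa using (((hstab _).sqrt.mul_const ‖y‖).add ((hstab _).sqrt.const_mul ‖x‖)).const_mul ‖Y‖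
    exact norm_le_zero_iff.mp <|
      ge_of_tendsto' hlim (norm_inner_le_of_krausMap_eq_self hA hB hunit hY hYK · x y)
  ext y
  exact inner_self_eq_zero.mp (hinner (Y y) y)

end KrausMapCompression

section Ergodic

variable {E ι : Type*} [NormedAddCommGroup E] [InnerProductSpace ℂ E] [FiniteDimensional ℂ E]
  [Fintype ι] {K : Submodule ℂ E} [K.HasOrthogonalProjection]
  {A : ι → E →L[ℂ] E} {B : ι → Kᗮ →L[ℂ] Kᗮ}

lemma exists_krausMap_eq_self_inner_self_eq_iInf (hA : ∀ j, ∀ v ∈ K, A j v ∈ K)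
    (hB : ∀ j (ξ : Kᗮ), B j ξ = Kᗮ.orthogonalProjectionOnto (A j ξ))
    (hunit : ∑ j, adjoint (A j) ∘L A j = 1) :
    ∃ X, krausMap A X = X ∧
      ∀ x, ⟪x, X x⟫_ℂ = (⨅ n, wordNormSq B n (Kᗮ.orthogonalProjectionOnto x) : ℝ) := by
  set T := fun n => (krausMap A)^[n] Kᗮ.starProjection
  have hform (ψ : ℕ → ℕ) (hψ : Tendsto ψ atTop atTop) (Y : E →L[ℂ] E)
      (hY : Tendsto (T ∘ ψ) atTop (𝓝 Y)) (x : E) :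
      ⟪x, Y x⟫_ℂ = (⨅ n, wordNormSq B n (Kᗮ.orthogonalProjectionOnto x) : ℝ) := by
    refine tendsto_nhds_unique
      (((continuous_const.inner (apply ℂ E x).continuous).tendsto Y).comp hY) ?_
    have := (Complex.continuous_ofReal.tendsto _).comp
      ((tendsto_wordNormSq_iInf B (sum_norm_compression_apply_sq_le hB hunit)
        (Kᗮ.orthogonalProjectionOnto x)).comp hψ)
    simpa [T, Function.comp_def, inner_krausMap_iterate_starProjection hA hB] using this
  obtain ⟨X, -, φ, hφ, hX⟩ := (isCompact_closedBall (0 : E →L[ℂ] E) 1).tendsto_subseq (x := T)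
    fun n => mem_closedBall_zero_iff.mpr
      ((norm_krausMap_iterate_apply_le hunit n _).trans Kᗮ.starProjection_norm_le)
  have hZX : Tendsto (T ∘ fun k => φ k + 1) atTop (𝓝 (krausMap A X)) := by
    simpa [T, Function.comp_def, Function.iterate_succ_apply'] using
      ((krausMap A).continuous.tendsto X).comp hX
  have hXform := hform φ hφ.tendsto_atTop X hX
  have hZXform := hform _ ((tendsto_add_atTop_nat 1).comp hφ.tendsto_atTop) _ hZX
  refine ⟨X, coe_injective ((ext_inner_map _ _).mp fun x => ?_), hXform⟩
  change ⟪krausMap A X x, x⟫_ℂ = ⟪X x, x⟫_ℂ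
  rw [← inner_conj_symm, ← inner_conj_symm (X x), hXform, hZXform]

lemma tendsto_wordNormSq_zero_of_ergodic (hA : ∀ j, ∀ v ∈ K, A j v ∈ K)
    (hB : ∀ j (ξ : Kᗮ), B j ξ = Kᗮ.orthogonalProjectionOnto (A j ξ))
    (hunit : ∑ j, adjoint (A j) ∘L A j = 1) (hK : K ≠ ⊥)
    (herg : ∀ X, krausMap A X = X → ∃ c : ℂ, X = c • 1) (ξ : Kᗮ) :
    Tendsto (wordNormSq B · ξ) atTop (𝓝 0) := by
  obtain ⟨X, hXfix, hXform⟩ := exists_krausMap_eq_self_inner_self_eq_iInf hA hB hunit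
  obtain ⟨c, rfl⟩ := herg X hXfix
  obtain ⟨u, hu, hu0⟩ := Submodule.ne_bot_iff K |>.mp hK
  have hc : c = 0 := by
    simpa [Submodule.orthogonalProjectionOnto_orthogonal_apply_eq_zero hu, hu0] using hXform u
  have h := hXform ξ
  rw [hc, zero_smul, zero_apply, inner_zero_right,
    Submodule.orthogonalProjectionOnto_mem_subspace_eq_self] at h
  have h0 : ⨅ n, wordNormSq B n ξ = 0 := by exact_mod_cast h.symm
  simpa [h0] using tendsto_wordNormSq_iInf B (sum_norm_compression_apply_sq_le hB hunit) ξ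

end Ergodic

/-- On a finite-dimensional Hilbert space, with `Σ_j A_j* A_j = 1`, `Ω` a unit common
eigenvector of the `A_j`, and `A_j^o` the compression of `A_j` to `H^o = (ℂΩ)^⊥`,
the transition operator `Z(X) = Σ_j A_j* X A_j` is ergodic (fixed points = ℂ·1) iff
the tuple `(A_1^o,…,A_d^o)` is stable: `Σ_{|α|=n} ‖A^o_α ξ‖² → 0` for every `ξ ∈ H^o`. -/
theorem ergodic_iff_stable {H : Type*}
    [NormedAddCommGroup H] [InnerProductSpace ℂ H] [FiniteDimensional ℂ H]
    (d : ℕ) (A : Fin d → H →L[ℂ] H)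
    (hunital : ∑ j, ContinuousLinearMap.adjoint (A j) ∘L A j = 1)
    (Ω : H) (hΩ : ‖Ω‖ = 1)
    (ω : Fin d → ℂ) (heig : ∀ j, A j Ω = ω j • Ω)
    (Ao : Fin d → ↥((ℂ ∙ Ω)ᗮ) →L[ℂ] ↥((ℂ ∙ Ω)ᗮ))
    (hAo : ∀ (j : Fin d) (ξ : ↥((ℂ ∙ Ω)ᗮ)),
      Ao j ξ = Submodule.orthogonalProjectionOnto ((ℂ ∙ Ω)ᗮ) (A j (ξ : H))) :
    (∀ X : H →L[ℂ] H,
        (∑ j, ContinuousLinearMap.adjoint (A j) ∘L X ∘L A j) = X → ∃ c : ℂ, X = c • 1) ↔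
      (∀ ξ : ↥((ℂ ∙ Ω)ᗮ), Filter.Tendsto
        (fun n : ℕ => ∑ α : Fin n → Fin d, ‖(List.ofFn fun i => Ao (α i)).prod ξ‖ ^ 2)
        Filter.atTop (nhds 0)) := by
  have hinv (j : Fin d) : ∀ v ∈ ℂ ∙ Ω, A j v ∈ ℂ ∙ Ω := by
    simp only [Submodule.mem_span_singleton]
    rintro _ ⟨a, rfl⟩
    exact ⟨a * ω j, by rw [map_smul, heig, smul_smul]⟩
  have hΩΩ : ⟪Ω, Ω⟫_ℂ = 1 := by simp [inner_self_eq_norm_sq_to_K, hΩ]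
  simp_rw [← krausMap_apply]
  constructor
  · refine tendsto_wordNormSq_zero_of_ergodic hinv hAo hunital ?_
    rw [Ne, Submodule.span_singleton_eq_bot, ← norm_eq_zero, hΩ]
    exact one_ne_zero
  · intro hstab X hX
    refine ⟨⟪Ω, X Ω⟫_ℂ, sub_eq_zero.mp (eq_zero_of_krausMap_eq_self hinv hAo hunital hstab
      (by rw [map_sub, map_smul, krausMap_one hunital, hX]) ?_)⟩
    simp only [Submodule.mem_span_singleton]
    rintro _ ⟨a, rfl⟩ _ ⟨b, rfl⟩
    rw [map_smul, inner_smul_left, inner_smul_right, sub_apply, inner_sub_right, smul_apply,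
      one_apply_eq_self, inner_smul_right, hΩΩ, mul_one, sub_self, mul_zero, mul_zero]
end
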